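/- Let x_1,...,x_n ∈ ℝ be sorted: x_1 ≤ x_2 ≤ ... ≤ x_n. Then there exists an optimal solution of the univariate k-means problem whose clusters are contiguous, i.e., each cluster consists of a set of consecutive indices {a_j, a_j+1, ..., b_j}. -/
import Mathlib


open Finset

/-- The mean minimizes the sum of squared deviations over a finite set. -/
lemma centroid_min' {n : ℕ} (x : Fin n → ℝ) (S : Finset (Fin n)) (c : ℝ) :
    ∑ i ∈ S, (x i - (∑ i ∈ S, x i) / S.card) ^ 2 ≤ ∑ i ∈ S, (x i - c) ^ 2 := by
  rcases S.eq_empty_or_nonempty with h | h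
  · simp [h]
  · set m : ℝ := (∑ i ∈ S, x i) / S.card with hm
    have hcard : (0 : ℝ) < S.card := by exact_mod_cast Finset.card_pos.2 h
    have hsum : (S.card : ℝ) * m = ∑ i ∈ S, x i := by
      rw [hm]; field_simp
    have expand : ∀ c : ℝ, ∑ i ∈ S, (x i - c) ^ 2
        = ∑ i ∈ S, x i ^ 2 - 2 * c * (∑ i ∈ S, x i) + S.card * c ^ 2 := by
      intro c
      rw [Finset.sum_congr rfl
        (fun i _ => by ring : ∀ i ∈ S, (x i - c) ^ 2 = x i ^ 2 - 2 * c * x i + c ^ 2)]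
      rw [Finset.sum_add_distrib, Finset.sum_sub_distrib, ← Finset.mul_sum,
        Finset.sum_const, nsmul_eq_mul]
    rw [expand m, expand c, ← hsum]
    nlinarith [sq_nonneg (c - m)]

/-- For sorted univariate data there is an optimal k-means solution whose
clusters are contiguous in the index order. -/
theorem stmt_18 (n k : ℕ) (hn : 0 < n) (hk : 0 < k) (x : Fin n → ℝ)
    (hsorted : Monotone x) :
    ∃ (μ : Fin k → ℝ) (a : Fin n → Fin k),
      (∀ ν : Fin k → ℝ,
        (∑ i, (x i - μ (a i)) ^ 2) ≤ ∑ i, ⨅ j, (x i - ν j) ^ 2) ∧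
      (∀ i, ∀ l, (x i - μ (a i)) ^ 2 ≤ (x i - μ l) ^ 2) ∧
      (∀ i₁ i₂ i₃ : Fin n, i₁ ≤ i₂ → i₂ ≤ i₃ → a i₁ = a i₃ → a i₂ = a i₁) := by
  classical
  haveI : Nonempty (Fin k) := ⟨⟨0, hk⟩⟩
  -- centroid of cluster j under assignment b
  set cent : (Fin n → Fin k) → Fin k → ℝ := fun b j =>
    (∑ i ∈ Finset.univ.filter fun i => b i = j, x i)
      / (Finset.univ.filter fun i => b i = j).card with hcent
  set G : (Fin n → Fin k) → ℝ := fun b => ∑ i, (x i - cent b (b i)) ^ 2 with hG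
  obtain ⟨b, hb⟩ := Finite.exists_min G
  set μ : Fin k → ℝ := cent b with hμ
  -- key: any assignment-with-centers cost dominates the cost with centroids
  have key : ∀ (c : Fin n → Fin k) (w : Fin k → ℝ),
      G c ≤ ∑ i, (x i - w (c i)) ^ 2 := by
    intro c w
    have h1 : G c
        = ∑ j, ∑ i ∈ Finset.univ.filter fun i => c i = j, (x i - cent c j) ^ 2 := by
      simp only [hG]
      rw [← Finset.sum_fiberwise Finset.univ c (fun i => (x i - cent c (c i)) ^ 2)]
      refine Finset.sum_congr rfl fun j _ => Finset.sum_congr rfl fun i hi => ?_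
      rw [(Finset.mem_filter.1 hi).2]
    have h2 : ∑ i, (x i - w (c i)) ^ 2
        = ∑ j, ∑ i ∈ Finset.univ.filter fun i => c i = j, (x i - w j) ^ 2 := by
      rw [← Finset.sum_fiberwise Finset.univ c (fun i => (x i - w (c i)) ^ 2)]
      refine Finset.sum_congr rfl fun j _ => Finset.sum_congr rfl fun i hi => ?_
      rw [(Finset.mem_filter.1 hi).2]
    rw [h1, h2]
    exact Finset.sum_le_sum fun j _ => centroid_min' x _ (w j)
  -- argmin assignment with minimal-index tie-breaking
  have hne : ∀ i : Fin n,
      (Finset.univ.filter fun j => ∀ l, (x i - μ j) ^ 2 ≤ (x i - μ l) ^ 2).Nonempty := by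
    intro i
    obtain ⟨j, hj⟩ := Finite.exists_min fun j => (x i - μ j) ^ 2
    exact ⟨j, by simpa using hj⟩
  set a : Fin n → Fin k := fun i =>
    (Finset.univ.filter fun j => ∀ l, (x i - μ j) ^ 2 ≤ (x i - μ l) ^ 2).min' (hne i)
    with ha
  have hamem : ∀ i, ∀ l, (x i - μ (a i)) ^ 2 ≤ (x i - μ l) ^ 2 := by
    intro i
    have h := Finset.min'_mem _ (hne i)
    exact (Finset.mem_filter.1 h).2
  refine ⟨μ, a, ?_, hamem, ?_⟩
  · -- optimality
    intro ν
    have hex : ∀ i : Fin n, ∃ j, ∀ l, (x i - ν j) ^ 2 ≤ (x i - ν l) ^ 2 :=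
      fun i => Finite.exists_min _
    choose aν haν using hex
    have hinf : ∀ i, (⨅ j, (x i - ν j) ^ 2) = (x i - ν (aν i)) ^ 2 := by
      intro i
      refine le_antisymm (ciInf_le ⟨0, ?_⟩ _) (le_ciInf (haν i))
      rintro y ⟨j, rfl⟩
      positivity
    calc ∑ i, (x i - μ (a i)) ^ 2
        ≤ ∑ i, (x i - μ (b i)) ^ 2 := Finset.sum_le_sum fun i _ => hamem i (b i)
      _ = G b := by simp only [hG, hμ]
      _ ≤ G aν := hb aν
      _ ≤ ∑ i, (x i - ν (aν i)) ^ 2 := key aν ν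
      _ = ∑ i, ⨅ j, (x i - ν j) ^ 2 := by
          exact Finset.sum_congr rfl fun i _ => (hinf i).symm
  · -- contiguity
    intro i₁ i₂ i₃ h12 h23 h13
    have h1 : ∀ l, (x i₁ - μ (a i₁)) ^ 2 ≤ (x i₁ - μ l) ^ 2 := hamem i₁
    have h3 : ∀ l, (x i₃ - μ (a i₁)) ^ 2 ≤ (x i₃ - μ l) ^ 2 := by
      intro l; rw [h13]; exact hamem i₃ l
    have hx12 : x i₁ ≤ x i₂ := hsorted h12
    have hx23 : x i₂ ≤ x i₃ := hsorted h23
    -- a i₁ is an argmin for i₂ too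
    have hA : ∀ l, (x i₂ - μ (a i₁)) ^ 2 ≤ (x i₂ - μ l) ^ 2 := by
      intro l
      rcases le_total (μ (a i₁)) (μ l) with hc | hc
      · nlinarith [h3 l, mul_nonneg (sub_nonneg.2 hx23) (sub_nonneg.2 hc)]
      · nlinarith [h1 l, mul_nonneg (sub_nonneg.2 hx12) (sub_nonneg.2 hc)]
    have hmemA : a i₁ ∈ Finset.univ.filter
        fun j => ∀ l, (x i₂ - μ j) ^ 2 ≤ (x i₂ - μ l) ^ 2 := by
      simp only [Finset.mem_filter, Finset.mem_univ, true_and]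
      exact hA
    have hlej : a i₂ ≤ a i₁ := Finset.min'_le _ _ hmemA
    rcases eq_or_lt_of_le hlej with h | h
    · exact h
    · exfalso
      have heq : (x i₂ - μ (a i₂)) ^ 2 = (x i₂ - μ (a i₁)) ^ 2 :=
        le_antisymm (hamem i₂ (a i₁)) (hA (a i₂))
      rcases le_total (μ (a i₂)) (μ (a i₁)) with hc | hc
      · -- then a i₂ would be in the argmin set of i₁, contradicting minimality
        have hle : (x i₁ - μ (a i₂)) ^ 2 ≤ (x i₁ - μ (a i₁)) ^ 2 := by
          nlinarith [mul_nonneg (sub_nonneg.2 hx12) (sub_nonneg.2 hc)]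
        have hmem : a i₂ ∈ Finset.univ.filter
            fun j => ∀ l, (x i₁ - μ j) ^ 2 ≤ (x i₁ - μ l) ^ 2 := by
          simp only [Finset.mem_filter, Finset.mem_univ, true_and]
          exact fun l => le_trans hle (h1 l)
        have := Finset.min'_le _ _ hmem
        exact absurd this (not_le.2 h)
      · -- then a i₂ would be in the argmin set of i₃, contradicting minimality
        have hle : (x i₃ - μ (a i₂)) ^ 2 ≤ (x i₃ - μ (a i₁)) ^ 2 := by
          nlinarith [mul_nonneg (sub_nonneg.2 hx23) (sub_nonneg.2 hc)]
        have hmem : a i₂ ∈ Finset.univ.filter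
            fun j => ∀ l, (x i₃ - μ j) ^ 2 ≤ (x i₃ - μ l) ^ 2 := by
          simp only [Finset.mem_filter, Finset.mem_univ, true_and]
          exact fun l => le_trans hle (h3 l)
        have h' : a i₃ ≤ a i₂ := Finset.min'_le _ _ hmem
        rw [← h13] at h'
        exact absurd h' (not_le.2 h)
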